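/- For a totally symmetric third-order tensor g on ℝ², there exists an angle θ such that both g₁₁₂(θ) = 0 and g₁₂₂(θ) = 0 if and only if μ := g₁₁₂² + g₁₂₂² - g₁₁₂ g₂₂₂ - g₁₂₂ g₁₁₁ = 0 (components at θ = 0). -/

import Mathlib

noncomputable section

/-- The standard orthonormal basis of ℝ². -/
def e : Fin 2 → (Fin 2 → ℝ) := fun i => Pi.single i 1

/-- The basis rotated by angle θ: k'₁ = cos θ k₁ + sin θ k₂, k'₂ = -sin θ k₁ + cos θ k₂. -/
def krot (θ : ℝ) : Fin 2 → (Fin 2 → ℝ) := fun α =>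
  if α = 0 then Real.cos θ • e 0 + Real.sin θ • e 1
  else (-Real.sin θ) • e 0 + Real.cos θ • e 1

/-- Third-order tensors on ℝ² as trilinear maps. -/
abbrev Tri := (Fin 2 → ℝ) →ₗ[ℝ] (Fin 2 → ℝ) →ₗ[ℝ] (Fin 2 → ℝ) →ₗ[ℝ] ℝ

/-- Total symmetry: invariance under all permutations of the arguments. -/
def Sym3 (g : Tri) : Prop :=
  (∀ x y z, g x y z = g y x z) ∧ (∀ x y z, g x y z = g x z y)

/-- The components g_{αβγ}(θ) = g(k'_α, k'_β, k'_γ) in the basis rotated by θ. -/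
def comp (g : Tri) (θ : ℝ) (α β γ : Fin 2) : ℝ := g (krot θ α) (krot θ β) (krot θ γ)

/-! Write a, b, c, d for g₁₁₁, g₁₁₂, g₁₂₂, g₂₂₂ at θ = 0. The trace part P = (a + c) + i(b + d) and
the traceless part Q = (a - 3c) + i(3b - d) of g rotate with weights one and three, and in the frame
rotated by θ one finds 4 (g₁₂₂(θ) + i g₁₁₂(θ)) = P e^{-iθ} - conj Q e^{3iθ}. Hence both components
vanish iff P = conj Q e^{4iθ}, which is solvable in θ iff |P| = |Q|; finally |P|² - |Q|² = -8μ. -/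

open Complex ComplexConjugate

lemma krot_apply_zero (θ : ℝ) : krot θ 0 = Real.cos θ • e 0 + Real.sin θ • e 1 := if_pos rfl

lemma krot_apply_one (θ : ℝ) : krot θ 1 = (-Real.sin θ) • e 0 + Real.cos θ • e 1 :=
  if_neg one_ne_zero

lemma krot_zero (α : Fin 2) : krot 0 α = e α := by
  fin_cases α <;> simp [krot_apply_zero, krot_apply_one]

lemma comp_zero (g : Tri) (α β γ : Fin 2) : comp g 0 α β γ = g (e α) (e β) (e γ) := by
  simp only [comp, krot_zero]

lemma Sym3.apply_e_mixed {g : Tri} (hg : Sym3 g) :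
    g (e 1) (e 0) (e 0) = g (e 0) (e 0) (e 1) ∧ g (e 0) (e 1) (e 0) = g (e 0) (e 0) (e 1) ∧
      g (e 1) (e 1) (e 0) = g (e 0) (e 1) (e 1) ∧ g (e 1) (e 0) (e 1) = g (e 0) (e 1) (e 1) :=
  ⟨(hg.1 _ _ _).trans (hg.2 _ _ _), hg.2 _ _ _, (hg.2 _ _ _).trans (hg.1 _ _ _), hg.1 _ _ _⟩

lemma comp_zero_zero_one {g : Tri} (hg : Sym3 g) (θ : ℝ) :
    comp g θ 0 0 1 =
      -Real.sin θ * Real.cos θ ^ 2 * comp g 0 0 0 0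
      + (Real.cos θ ^ 3 - 2 * Real.cos θ * Real.sin θ ^ 2) * comp g 0 0 0 1
      + (2 * Real.cos θ ^ 2 * Real.sin θ - Real.sin θ ^ 3) * comp g 0 0 1 1
      + Real.sin θ ^ 2 * Real.cos θ * comp g 0 1 1 1 := by
  obtain ⟨h100, h010, h110, h101⟩ := hg.apply_e_mixed
  simp only [comp_zero]
  simp only [comp, krot_apply_zero, krot_apply_one, map_add, map_smul, LinearMap.add_apply,
    LinearMap.smul_apply, smul_eq_mul, h100, h010, h110, h101]
  ring

lemma comp_zero_one_one {g : Tri} (hg : Sym3 g) (θ : ℝ) :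
    comp g θ 0 1 1 =
      Real.sin θ ^ 2 * Real.cos θ * comp g 0 0 0 0
      + (Real.sin θ ^ 3 - 2 * Real.sin θ * Real.cos θ ^ 2) * comp g 0 0 0 1
      + (Real.cos θ ^ 3 - 2 * Real.sin θ ^ 2 * Real.cos θ) * comp g 0 0 1 1
      + Real.sin θ * Real.cos θ ^ 2 * comp g 0 1 1 1 := by
  obtain ⟨h100, h010, h110, h101⟩ := hg.apply_e_mixed
  simp only [comp_zero]
  simp only [comp, krot_apply_zero, krot_apply_one, map_add, map_smul, LinearMap.add_apply,
    LinearMap.smul_apply, smul_eq_mul, h100, h010, h110, h101]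
  ring

def weightOne (g : Tri) : ℂ :=
  ⟨comp g 0 0 0 0 + comp g 0 0 1 1, comp g 0 0 0 1 + comp g 0 1 1 1⟩

def weightThree (g : Tri) : ℂ :=
  ⟨comp g 0 0 0 0 - 3 * comp g 0 0 1 1, 3 * comp g 0 0 0 1 - comp g 0 1 1 1⟩

lemma four_mul_comp_mul_exp {g : Tri} (hg : Sym3 g) (θ : ℝ) :
    4 * (comp g θ 0 1 1 + comp g θ 0 0 1 * I) * exp (θ * I) =
      weightOne g - conj (weightThree g) * exp (θ * I) ^ 4 := by
  have hpy := Real.sin_sq_add_cos_sq θ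
  rw [comp_zero_zero_one hg, comp_zero_one_one hg, exp_mul_I, ← ofReal_cos, ← ofReal_sin]
  apply Complex.ext <;>
    simp only [weightOne, weightThree, pow_succ, pow_zero, one_mul, mul_re, mul_im, add_re, add_im,
      sub_re, sub_im, conj_re, conj_im, ofReal_re, ofReal_im, I_re, I_im, re_ofNat, im_ofNat]
  -- both sides are quartic in (cos θ, sin θ) once the constant term is multiplied by (cos² + sin²)²
  · linear_combination
      (comp g 0 0 0 0 + comp g 0 0 1 1) * (Real.sin θ ^ 2 + Real.cos θ ^ 2 + 1) * hpy
  · linear_combination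
      (comp g 0 0 0 1 + comp g 0 1 1 1) * (Real.sin θ ^ 2 + Real.cos θ ^ 2 + 1) * hpy

lemma comp_eq_zero_iff {g : Tri} (hg : Sym3 g) (θ : ℝ) :
    comp g θ 0 0 1 = 0 ∧ comp g θ 0 1 1 = 0 ↔
      weightOne g = conj (weightThree g) * exp (θ * I) ^ 4 := by
  rw [← sub_eq_zero (a := weightOne g), ← four_mul_comp_mul_exp hg, mul_eq_zero, mul_eq_zero,
    or_iff_right (by norm_num : (4 : ℂ) ≠ 0), or_iff_left (exp_ne_zero _), Complex.ext_iff]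
  simp [and_comm]

lemma exists_eq_mul_exp_mul_I_pow_iff {n : ℕ} (hn : n ≠ 0) (z w : ℂ) :
    (∃ θ : ℝ, z = w * exp (θ * I) ^ n) ↔ ‖z‖ = ‖w‖ := by
  refine ⟨fun ⟨θ, h⟩ ↦ by rw [h, norm_mul, norm_pow, norm_exp_ofReal_mul_I, one_pow, mul_one], ?_⟩
  intro h
  rcases eq_or_ne w 0 with rfl | hw
  · exact ⟨0, by simpa using h⟩
  have hzw : ‖z / w‖ = 1 := by rw [norm_div, h, div_self (norm_ne_zero_iff.mpr hw)]
  refine ⟨arg (z / w) / n, ?_⟩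
  rw [← exp_nat_mul, ← mul_assoc, ofReal_div, ofReal_natCast,
    mul_div_cancel₀ _ (Nat.cast_ne_zero.mpr hn), ← one_mul (exp _), ← ofReal_one, ← hzw,
    norm_mul_exp_arg_mul_I, mul_div_cancel₀ _ hw]

lemma norm_weightOne_eq_norm_weightThree_iff (g : Tri) :
    ‖weightOne g‖ = ‖weightThree g‖ ↔
      (comp g 0 0 0 1)^2 + (comp g 0 0 1 1)^2
        - comp g 0 0 0 1 * comp g 0 1 1 1
        - comp g 0 0 1 1 * comp g 0 0 0 0 = 0 := by
  rw [← sq_eq_sq₀ (norm_nonneg _) (norm_nonneg _), ← normSq_eq_norm_sq, ← normSq_eq_norm_sq,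
    weightOne, weightThree, normSq_mk, normSq_mk]
  constructor <;> intro h <;> linarith

/-- there exists θ with g₁₁₂(θ) = 0 and g₁₂₂(θ) = 0 iff
μ := g₁₁₂² + g₁₂₂² - g₁₁₂ g₂₂₂ - g₁₂₂ g₁₁₁ = 0 (components at θ = 0). -/
theorem stmt9 (g : Tri) (hg : Sym3 g) :
    (∃ θ : ℝ, comp g θ 0 0 1 = 0 ∧ comp g θ 0 1 1 = 0) ↔
      (comp g 0 0 0 1)^2 + (comp g 0 0 1 1)^2
        - comp g 0 0 0 1 * comp g 0 1 1 1
        - comp g 0 0 1 1 * comp g 0 0 0 0 = 0 := by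
  calc (∃ θ : ℝ, comp g θ 0 0 1 = 0 ∧ comp g θ 0 1 1 = 0)
      ↔ ∃ θ : ℝ, weightOne g = conj (weightThree g) * exp (θ * I) ^ 4 :=
        exists_congr (comp_eq_zero_iff hg)
    _ ↔ ‖weightOne g‖ = ‖weightThree g‖ := by
        rw [exists_eq_mul_exp_mul_I_pow_iff four_ne_zero, norm_conj]
    _ ↔ _ := norm_weightOne_eq_norm_weightThree_iff g
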